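/- If P is a polynomial of degree n with P(z) ≠ 0 for |z| < 1 and Q(z) = z^n·conj(P(1/conj(z))), then for every complex α with |α| ≥ 1 and every z with |z| = 1, the ratio |D_α Q(z)| / |D_α P(z)| ≥ 1 whenever D_α P(z) ≠ 0. -/

import Mathlib

/-!
On the unit circle `Q(z) = zⁿ·conj P(z)`, and comparing coefficients gives
`n P(z) - z P'(z) = w·conj Q'(z)` and `n Q(z) - z Q'(z) = w·conj P'(z)` with `w = zⁿ·conj z`,
so `D_α P = w·conj Q' + α P'` and `D_α Q = w·conj P' + α Q'`. Expanding the squares,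
`|D_α Q|² - |D_α P|² = (|α|² - 1)(|Q'|² - |P'|²)`, so it remains to see `|P'| ≤ |Q'|`
on the circle, i.e. `|P'| ≤ |n P - z P'|`. This holds because `z P'/P = ∑ z/(z - r)` over
the roots `r` of `P`, and `|r| ≥ 1` forces `Re (z/(z - r)) ≤ 1/2`.
-/

open Polynomial Complex ComplexConjugate

theorem Complex.norm_le_norm_ofReal_sub_iff (c : ℝ) (w : ℂ) :
    ‖w‖ ≤ ‖(c : ℂ) - w‖ ↔ 2 * c * w.re ≤ c ^ 2 := by
  rw [← sq_le_sq₀ (norm_nonneg _) (norm_nonneg _), Complex.sq_norm, Complex.sq_norm, normSq_sub,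
    normSq_ofReal]
  simp only [conj_re, conj_im, mul_re, ofReal_re, ofReal_im]
  constructor <;> intro h <;> nlinarith

theorem Complex.re_div_sub_le_half {z r : ℂ} (hz : ‖z‖ = 1) (hr : 1 ≤ ‖r‖) :
    (z / (z - r)).re ≤ 1 / 2 := by
  rcases eq_or_ne z r with rfl | hzr
  · simp
  have hzr' : z - r ≠ 0 := sub_ne_zero.mpr hzr
  have h : ‖z / (z - r)‖ ≤ ‖((1 : ℝ) : ℂ) - z / (z - r)‖ := by
    rw [ofReal_one, one_sub_div hzr', sub_sub_cancel_left, norm_div, norm_div, norm_neg, hz]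
    gcongr
  have := (norm_le_norm_ofReal_sub_iff 1 _).mp h
  linarith

theorem Complex.norm_mul_conj_add_mul_le_of_norm_le {w α a b : ℂ} (hw : ‖w‖ = 1)
    (hα : 1 ≤ ‖α‖) (hab : ‖a‖ ≤ ‖b‖) :
    ‖w * conj b + α * a‖ ≤ ‖w * conj a + α * b‖ := by
  rw [← sq_le_sq₀ (norm_nonneg _) (norm_nonneg _), Complex.sq_norm, Complex.sq_norm, normSq_add,
    normSq_add]
  have hcross : (w * conj b * conj (α * a)).re = (w * conj a * conj (α * b)).re := by
    rw [map_mul, map_mul]; ring_nf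
  have hα' : 1 ≤ normSq α := by rw [← Complex.sq_norm]; nlinarith
  have hab' : normSq a ≤ normSq b := by rw [← Complex.sq_norm, ← Complex.sq_norm]; gcongr
  have hw' : normSq w = 1 := by rw [← Complex.sq_norm, hw, one_pow]
  simp only [hcross, normSq_mul, normSq_conj, hw']
  nlinarith

namespace Polynomial

section Reflect

variable {R : Type*} [CommRing R]

theorem X_mul_derivative_reflect {f : R[X]} {n : ℕ} (hf : f.natDegree ≤ n) :
    X * derivative (reflect n f) = reflect n (C (n : R) * f - X * derivative f) := by
  ext (_ | k)
  · rcases n with _ | m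
    · simp
    · simp only [coeff_X_mul_zero, coeff_reflect, revAt_zero, coeff_sub, coeff_C_mul,
        coeff_X_mul, coeff_derivative]
      push_cast
      ring
  · rw [coeff_X_mul, coeff_derivative, coeff_reflect, coeff_reflect]
    rcases le_or_gt (k + 1) n with hk | hk
    · obtain ⟨j, rfl⟩ := Nat.exists_eq_add_of_le' hk
      rw [revAt_le hk, Nat.add_sub_cancel]
      rcases j with _ | i
      · simp [mul_comm]
      · simp only [coeff_sub, coeff_C_mul, coeff_X_mul, coeff_derivative]
        push_cast
        ring
    · have hfk : f.coeff (k + 1) = 0 := coeff_eq_zero_of_natDegree_lt (hf.trans_lt hk)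
      simp [revAt_eq_self_of_lt hk, coeff_X_mul, coeff_derivative, hfk]

theorem natDegree_X_mul_derivative_le (p : R[X]) :
    (X * derivative p).natDegree ≤ p.natDegree := by
  rcases eq_or_ne p.natDegree 0 with hp | hp
  · simp [derivative_of_natDegree_zero hp]
  · exact natDegree_mul_le.trans (by
      have := natDegree_X_le (R := R)
      have := natDegree_derivative_lt hp
      omega)

theorem eval_reflect {K : Type*} [Field K] {f : K[X]} {n : ℕ} (hf : f.natDegree ≤ n) {z : K}
    (hz : z ≠ 0) : (reflect n f).eval z = z ^ n * f.eval z⁻¹ := by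
  let := invertibleOfNonzero (inv_ne_zero hz)
  have h := eval₂_reflect_mul_pow (RingHom.id K) z⁻¹ n f hf
  rw [invOf_eq_inv, inv_inv] at h
  rw [eval, eval, ← h, mul_comm, mul_assoc, ← mul_pow, inv_mul_cancel₀ hz, one_pow, mul_one]

end Reflect

/-- `P*(z) = zⁿ·conj P(1/conj z)` when `P.natDegree ≤ n` (see `eval_conjReflect`). -/
noncomputable def conjReflect (n : ℕ) (P : ℂ[X]) : ℂ[X] := reflect n (P.map (starRingEnd ℂ))

variable {n : ℕ} {P : ℂ[X]} {z : ℂ}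

@[simp]
theorem conjReflect_conjReflect : conjReflect n (conjReflect n P) = P := by
  simp [conjReflect, reflect_map, map_map, RingHomCompTriple.comp_eq]

theorem natDegree_conjReflect_le (hP : P.natDegree ≤ n) : (conjReflect n P).natDegree ≤ n :=
  natDegree_reflect_le.trans (by simpa [natDegree_map] using hP)

theorem eval_conjReflect (hP : P.natDegree ≤ n) (hz : z ≠ 0) :
    (conjReflect n P).eval z = z ^ n * conj (P.eval (conj z)⁻¹) := by
  rw [conjReflect, eval_reflect (by rwa [natDegree_map]) hz, ← map_inv₀, ← eval_map_apply,
    conj_conj]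

theorem eq_conjReflect_of_eval_eq {Q : ℂ[X]} (hP : P.natDegree ≤ n)
    (hQ : ∀ z : ℂ, z ≠ 0 → Q.eval z = z ^ n * conj (P.eval (conj z)⁻¹)) :
    Q = conjReflect n P := by
  refine eq_of_infinite_eval_eq _ _ ((Set.finite_singleton 0).infinite_compl.mono fun z hz => ?_)
  rw [Set.mem_ofPred_eq, hQ z hz, eval_conjReflect hP hz]

theorem eval_conjReflect_of_norm_eq_one (hP : P.natDegree ≤ n) (hz : ‖z‖ = 1) :
    (conjReflect n P).eval z = z ^ n * conj (P.eval z) := by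
  rw [eval_conjReflect hP (norm_ne_zero_iff.mp (hz ▸ one_ne_zero)), ← inv_eq_conj hz, inv_inv]

theorem mul_eval_derivative_conjReflect (hP : P.natDegree ≤ n) (hz : ‖z‖ = 1) :
    z * (derivative (conjReflect n P)).eval z =
      z ^ n * conj (n * P.eval z - z * (derivative P).eval z) := by
  have hdeg : (C (n : ℂ) * P - X * derivative P).natDegree ≤ n :=
    (natDegree_sub_le_of_le ((natDegree_C_mul_le _ _).trans hP)
      ((natDegree_X_mul_derivative_le P).trans hP)).trans (max_self n).le
  have h := congrArg (eval z) (X_mul_derivative_reflect (f := P.map (starRingEnd ℂ)) (n := n)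
    (by rwa [natDegree_map]))
  have hmap : C (n : ℂ) * P.map (starRingEnd ℂ) - X * derivative (P.map (starRingEnd ℂ)) =
      (C (n : ℂ) * P - X * derivative P).map (starRingEnd ℂ) := by
    simp [derivative_map]
  rw [eval_mul, eval_X, hmap] at h
  rw [conjReflect, h, ← conjReflect, eval_conjReflect_of_norm_eq_one hdeg hz]
  simp

theorem sub_mul_eval_derivative_eq_conj (hP : P.natDegree ≤ n) (hz : ‖z‖ = 1) :
    n * P.eval z - z * (derivative P).eval z =
      z ^ n * conj z * conj ((derivative (conjReflect n P)).eval z) := by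
  have hzn : z ^ n * conj (z ^ n) = 1 := by
    rw [mul_conj', norm_pow, hz]; simp
  rw [mul_assoc, ← map_mul, mul_eval_derivative_conjReflect hP hz, map_mul, conj_conj,
    ← mul_assoc, hzn, one_mul]

theorem re_mul_eval_derivative_div_eval_le (hPz : ∀ z : ℂ, ‖z‖ < 1 → P.eval z ≠ 0)
    (hz : ‖z‖ = 1) (hPz0 : P.eval z ≠ 0) :
    (z * ((derivative P).eval z / P.eval z)).re ≤ P.natDegree / 2 := by
  have hP : P ≠ 0 := fun h => hPz 0 (by simp) (by simp [h])
  have hs := IsAlgClosed.splits P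
  have hre : ∀ r ∈ P.roots, (z * (1 / (z - r))).re ≤ 1 / 2 := fun r hr => by
    have hr1 : 1 ≤ ‖r‖ := not_lt.mp fun h => hPz r h ((mem_roots hP).mp hr)
    rw [mul_one_div]; exact re_div_sub_le_half hz hr1
  rw [hs.eval_derivative_div_eval_of_ne_zero hPz0, ← Multiset.sum_map_mul_left,
    ← reCLM_apply, map_multiset_sum, Multiset.map_map, hs.natDegree_eq_card_roots,
    div_eq_mul_one_div, ← nsmul_eq_mul, ← Multiset.card_map (⇑reCLM ∘ _)]
  refine Multiset.sum_le_card_nsmul _ _ fun x hx => ?_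
  obtain ⟨r, hr, rfl⟩ := Multiset.mem_map.mp hx
  exact hre r hr

theorem norm_eval_derivative_le_of_eval_ne_zero (hPz : ∀ z : ℂ, ‖z‖ < 1 → P.eval z ≠ 0)
    (hz : ‖z‖ = 1) :
    ‖(derivative P).eval z‖ ≤ ‖P.natDegree * P.eval z - z * (derivative P).eval z‖ := by
  by_cases hPz0 : P.eval z = 0
  · simp [hPz0, hz]
  set w := z * ((derivative P).eval z / P.eval z)
  have hw : ‖w‖ ≤ ‖((P.natDegree : ℝ) : ℂ) - w‖ := by
    have := re_mul_eval_derivative_div_eval_le hPz hz hPz0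
    have hn : (0 : ℝ) ≤ P.natDegree := P.natDegree.cast_nonneg
    exact (norm_le_norm_ofReal_sub_iff _ _).mpr (by nlinarith)
  calc ‖(derivative P).eval z‖ = ‖w‖ * ‖P.eval z‖ := by
        simp [w, hz, hPz0]
    _ ≤ ‖((P.natDegree : ℝ) : ℂ) - w‖ * ‖P.eval z‖ := by gcongr
    _ = ‖P.natDegree * P.eval z - z * (derivative P).eval z‖ := by
        rw [← norm_mul]
        congr 1
        simp only [w, ofReal_natCast]
        field_simp

end Polynomial

theorem aziz_ratio_ge_one_general (n : ℕ) (P Q : Polynomial ℂ)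
    (hP : P.natDegree = n)
    (hPz : ∀ z : ℂ, ‖z‖ < 1 → P.eval z ≠ 0)
    (hQ : ∀ z : ℂ, z ≠ 0 →
      Q.eval z = z ^ n * (starRingEnd ℂ) (P.eval ((starRingEnd ℂ) z)⁻¹)) :
    ∀ α : ℂ, 1 ≤ ‖α‖ → ∀ z : ℂ, ‖z‖ = 1 →
      ((n : ℂ) * P.eval z + (α - z) * (derivative P).eval z) ≠ 0 →
      ‖(n : ℂ) * Q.eval z + (α - z) * (derivative Q).eval z‖ /
          ‖(n : ℂ) * P.eval z + (α - z) * (derivative P).eval z‖ ≥ 1 := by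
  intro α hα z hz hDP
  obtain rfl : Q = conjReflect n P := eq_conjReflect_of_eval_eq hP.le hQ
  have hw : ‖z ^ n * conj z‖ = 1 := by simp [hz]
  have hPQ := sub_mul_eval_derivative_eq_conj hP.le hz
  have hQP := sub_mul_eval_derivative_eq_conj (natDegree_conjReflect_le hP.le) hz
  rw [conjReflect_conjReflect] at hQP
  have hab : ‖(derivative P).eval z‖ ≤ ‖(derivative (conjReflect n P)).eval z‖ := by
    simpa [hP, hPQ, hz] using norm_eval_derivative_le_of_eval_ne_zero hPz hz
  have hDP_eq : (n : ℂ) * P.eval z + (α - z) * (derivative P).eval z =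
      z ^ n * conj z * conj ((derivative (conjReflect n P)).eval z) +
        α * (derivative P).eval z := by
    linear_combination hPQ
  have hDQ_eq :
      (n : ℂ) * (conjReflect n P).eval z + (α - z) * (derivative (conjReflect n P)).eval z =
        z ^ n * conj z * conj ((derivative P).eval z) +
          α * (derivative (conjReflect n P)).eval z := by
    linear_combination hQP
  rw [hDP_eq] at hDP ⊢
  rw [hDQ_eq, ge_iff_le, one_le_div (norm_pos_iff.mpr hDP)]
  exact norm_mul_conj_add_mul_le_of_norm_le hw hα hab

theorem aziz_ratio_ge_one (n : ℕ) (hn : 1 ≤ n) (P Q : Polynomial ℂ)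
    (hP : P.natDegree = n)
    (hPz : ∀ z : ℂ, ‖z‖ < 1 → P.eval z ≠ 0)
    (hQ : ∀ z : ℂ, z ≠ 0 →
      Q.eval z = z ^ n * (starRingEnd ℂ) (P.eval ((starRingEnd ℂ) z)⁻¹)) :
    ∀ α : ℂ, 1 ≤ ‖α‖ → ∀ z : ℂ, ‖z‖ = 1 →
      ((n : ℂ) * P.eval z + (α - z) * (derivative P).eval z) ≠ 0 →
      ‖(n : ℂ) * Q.eval z + (α - z) * (derivative Q).eval z‖ /
          ‖(n : ℂ) * P.eval z + (α - z) * (derivative P).eval z‖ ≥ 1 :=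
  aziz_ratio_ge_one_general n P Q hP hPz hQ
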